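/- arXiv:math/0512048 — 3 statements merged into one kernel-verified Lean document; each statement's English description precedes it below -/
import Mathlib

section
/- Let m ≥ 1 and s ≥ m + 2, and let h satisfy 0 < sh < π. Then the kernel B_h^s is m times differentiable and D^m B_h^s(x) = (2h)^{−m} Δ_{2h}^m B_h^{s−m}(x) for all x, where Δ_{2h}^m g(x) = Σ_{i=0}^m (−1)^{m−i} binom(m,i) g(x − mh + 2ih) is the m-th symmetric difference with step 2h. -/
open scoped Real BigOperators
open MeasureTheory

noncomputable section

/-- Representative of `x` in `[-π, π)` on the circle `ℝ/2πℤ`. -/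
def rep (x : ℝ) : ℝ := x - 2 * Real.pi * ⌊(x + Real.pi) / (2 * Real.pi)⌋

/-- The basic averaging kernel `B_h^1` on the circle: `1/(2h)` on `[-h,h]`, `0` elsewhere. -/
def B1 (h : ℝ) (x : ℝ) : ℝ := if |rep x| ≤ h then 1 / (2 * h) else 0

/-- Convolution of real functions over the circle: `(f*g)(x) = ∫_T f(u) g(x-u) du`. -/
def convR (f g : ℝ → ℝ) (x : ℝ) : ℝ := ∫ u in (-Real.pi)..Real.pi, f u * g (x - u)

/-- The iterated kernels `B_h^s`, with `B_h^1 = B1 h` and `B_h^s = B_h^1 * B_h^{s-1}`. -/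
def B (h : ℝ) : ℕ → ℝ → ℝ
  | 0 => fun _ => 0
  | 1 => B1 h
  | (s + 2) => convR (B1 h) (B h (s + 1))

/-- Convolution `(f * g)(x) = ∫_T f(u) g(x-u) du` of a complex function `f`
with a real kernel `g`. -/
def convC (g : ℝ → ℝ) (f : ℝ → ℂ) (x : ℝ) : ℂ :=
  ∫ u in (-Real.pi)..Real.pi, f u * (g (x - u) : ℂ)

/-- The operators `I_{x,δ}^s f`: `I_{x,δ}^0 f = f(x)`, `I_{x,0}^s f = f(x)` (identity),
and `I_{x,δ}^s f = (f * B_{|δ|}^s)(x)` otherwise (so that `I_{x,-δ}^s = I_{x,δ}^s`). -/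
def Iop (x δ : ℝ) (s : ℕ) (f : ℝ → ℂ) : ℂ :=
  if s = 0 ∨ δ = 0 then f x else convC (B |δ| s) f x

/-- The smoothing operator `w_{x,h,2k}^s f = Σ_{i=0}^{2k} (-1)^{k-i} (C(2k,i)/C(2k,k)) I_{x,(i-k)h}^s f`. -/
def wop (x h : ℝ) (k s : ℕ) (f : ℝ → ℂ) : ℂ :=
  ∑ i ∈ Finset.range (2 * k + 1),
    ((-1 : ℂ) ^ ((k : ℤ) - (i : ℤ))) *
      ((Nat.choose (2 * k) i : ℂ) / (Nat.choose (2 * k) k : ℂ)) *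
        Iop x (((i : ℝ) - (k : ℝ)) * h) s f

/-- The `m`-th difference of a complex-valued `f` at `x` with step `h`:
`Δ_h^m f(x) = Σ_{i=0}^m (-1)^{m-i} C(m,i) f(x - (m/2)h + ih)`. -/
def deltaC (m : ℕ) (h : ℝ) (f : ℝ → ℂ) (x : ℝ) : ℂ :=
  ∑ i ∈ Finset.range (m + 1),
    ((-1 : ℂ) ^ (m - i)) * (Nat.choose m i : ℂ) * f (x - ((m : ℝ) / 2) * h + (i : ℝ) * h)

/-- The `m`-th difference of a real-valued `g` at `x` with step `h`. -/
def deltaR (m : ℕ) (h : ℝ) (g : ℝ → ℝ) (x : ℝ) : ℝ :=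
  ∑ i ∈ Finset.range (m + 1),
    ((-1 : ℝ) ^ (m - i)) * (Nat.choose m i : ℝ) * g (x - ((m : ℝ) / 2) * h + (i : ℝ) * h)

/-- Sup norm `‖f‖ = sup_{x ∈ T} |f(x)|`. -/
def supNorm (f : ℝ → ℂ) : ℝ := sSup {y : ℝ | ∃ x : ℝ, y = ‖f x‖}

/-- The `m`-th modulus of smoothness `ω_m(f,δ) = sup_{x, |h|<δ} |Δ_h^m f(x)|`. -/
def modulus (m : ℕ) (f : ℝ → ℂ) (δ : ℝ) : ℝ :=
  sSup {y : ℝ | ∃ x h : ℝ, |h| < δ ∧ y = ‖deltaC m h f x‖}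

/-- `τ` is a trigonometric polynomial of degree at most `n`. -/
def IsTrigPoly (n : ℕ) (τ : ℝ → ℂ) : Prop :=
  ∃ c : ℤ → ℂ, ∀ t : ℝ,
    τ t = ∑ j ∈ Finset.Icc (-(n : ℤ)) (n : ℤ), c j * Complex.exp ((j : ℂ) * t * Complex.I)

/-- The best uniform approximation `E_n(f) = inf_{τ ∈ T_n} ‖f - τ‖`. -/
def E (n : ℕ) (f : ℝ → ℂ) : ℝ :=
  sInf {y : ℝ | ∃ τ : ℝ → ℂ, IsTrigPoly n τ ∧ y = supNorm (fun x => f x - τ x)}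

/-- The `j`-th Fourier coefficient `ĉ_j(f) = (1/2π) ∫_T f(u) e^{-iju} du`. -/
def fc (f : ℝ → ℂ) (j : ℤ) : ℂ :=
  (1 / (2 * (Real.pi : ℂ))) * ∫ u in (-Real.pi)..Real.pi,
    f u * Complex.exp (-(j : ℂ) * (u : ℂ) * Complex.I)

/-- The `i`-th partial Fourier sum `s_i f(x) = Σ_{|j| ≤ i} ĉ_j(f) e^{ijx}`. -/
def PS (i : ℕ) (f : ℝ → ℂ) (x : ℝ) : ℂ :=
  ∑ j ∈ Finset.Icc (-(i : ℤ)) (i : ℤ), fc f j * Complex.exp ((j : ℂ) * (x : ℂ) * Complex.I)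

/-- The Fejér mean `σ_j f = (1/(j+1)) Σ_{i=0}^j s_i f`. -/
def Fej (j : ℕ) (f : ℝ → ℂ) (x : ℝ) : ℂ :=
  (1 / ((j : ℂ) + 1)) * ∑ i ∈ Finset.range (j + 1), PS i f x

/-- The de la Vallée Poussin mean `v_{k,m} f = (1/m) Σ_{i=km}^{(k+1)m-1} s_i f`. -/
def VP (k m : ℕ) (f : ℝ → ℂ) (x : ℝ) : ℂ :=
  (1 / (m : ℂ)) * ∑ i ∈ Finset.Ico (k * m) ((k + 1) * m), PS i f x

/-- `α = 2^{-5/2} 3^{1/2} π`. -/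
def alpha : ℝ := (2 : ℝ) ^ (-(5 / 2 : ℝ)) * Real.sqrt 3 * Real.pi

/-- The `L¹` norm on the circle of a complex function. -/
def L1C (g : ℝ → ℂ) : ℝ := ∫ u in (-Real.pi)..Real.pi, ‖g u‖

/-- The `L¹` norm on the circle of a real function. -/
def L1R (g : ℝ → ℝ) : ℝ := ∫ u in (-Real.pi)..Real.pi, |g u|

/-! For `0 ≤ h < π`, convolving with `B_h^1` is the moving average
`g ↦ (2h)⁻¹ ∫_{x-h}^{x+h} g`. Hence `B_h^{k+2}` is continuous, and by the fundamental theorem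
of calculus `B_h^{k+3}` has derivative `(2h)⁻¹ (B_h^{k+2}(x+h) - B_h^{k+2}(x-h))`, a first
difference with step `2h`. Differences commute with derivatives, so iterating gives `D^m B_h^s`
as `(2h)^{-m}` times an `m`-th difference of `B_h^{s-m}`; the symmetric difference
`Δ_{2h}^m g(x)` is the iterated forward difference at `x - mh`. -/

theorem deltaR_eq_fwdDiff_iter (m : ℕ) (d : ℝ) (g : ℝ → ℝ) (x : ℝ) :
    deltaR m d g x = (fwdDiff d)^[m] g (x - m / 2 * d) := by
  rw [fwdDiff_iter_eq_sum_shift]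
  refine Finset.sum_congr rfl fun i _ => ?_
  simp only [zsmul_eq_mul, nsmul_eq_mul]
  push_cast
  rfl

theorem hasDerivAt_fwdDiff_iter {E : Type*} [NormedAddCommGroup E] [NormedSpace ℝ E]
    {f f' : ℝ → E} (hf : ∀ x, HasDerivAt f (f' x) x) (d : ℝ) (n : ℕ) (x : ℝ) :
    HasDerivAt ((fwdDiff d)^[n] f) ((fwdDiff d)^[n] f' x) x := by
  induction n generalizing f f' x with
  | zero => exact hf x
  | succ n ih =>
    refine ih (fun y => ?_) x
    exact ((hf (y + d)).comp_add_const y d).sub (hf y)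

section Window

variable {E : Type*} [NormedAddCommGroup E] [NormedSpace ℝ E] {g : ℝ → E}

theorem integral_window_eq_sub (hg : ∀ a b, IntervalIntegrable g volume a b) (h x : ℝ) :
    ∫ t in (x - h)..(x + h), g t = (∫ t in 0..(x + h), g t) - ∫ t in 0..(x - h), g t :=
  (intervalIntegral.integral_interval_sub_left (hg _ _) (hg _ _)).symm

theorem continuous_integral_window (hg : ∀ a b, IntervalIntegrable g volume a b) (h : ℝ) :
    Continuous fun x => ∫ t in (x - h)..(x + h), g t := by
  simp only [integral_window_eq_sub hg]
  have hG := intervalIntegral.continuous_primitive hg 0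
  exact (hG.comp (continuous_add_const h)).sub (hG.comp (continuous_id.sub continuous_const))

theorem hasDerivAt_integral_window [CompleteSpace E] (hg : Continuous g) (h x : ℝ) :
    HasDerivAt (fun x => ∫ t in (x - h)..(x + h), g t) (g (x + h) - g (x - h)) x := by
  simp only [integral_window_eq_sub (hg.intervalIntegrable) h]
  have hG (y : ℝ) : HasDerivAt (fun y => ∫ t in 0..y, g t) (g y) y :=
    (hg.integral_hasStrictDerivAt 0 y).hasDerivAt
  exact ((hG (x + h)).comp_add_const x h).sub
    (by simpa [← sub_eq_add_neg] using (hG (x - h)).comp_add_const x (-h))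

end Window

theorem rep_of_mem_Ico {u : ℝ} (hu : u ∈ Set.Ico (-π) π) : rep u = u := by
  have hfloor : ⌊(u + π) / (2 * π)⌋ = 0 := by
    rw [Int.floor_eq_zero_iff, Set.mem_Ico, le_div_iff₀ (by positivity),
      div_lt_one (by positivity)]
    constructor <;> linarith [hu.1, hu.2]
  simp [rep, hfloor]

theorem rep_pi : rep π = -π := by
  have hfloor : ⌊(π + π) / (2 * π)⌋ = 1 := by
    rw [← two_mul, div_self (by positivity), Int.floor_one]
  rw [rep, hfloor]
  ring

theorem B1_eq_indicator {h : ℝ} (hπ : h < π) {u : ℝ} (hu : u ∈ Set.Icc (-π) π) :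
    B1 h u = (Set.Icc (-h) h).indicator (fun _ => (2 * h)⁻¹) u := by
  rcases hu.2.lt_or_eq with hlt | rfl
  · simp only [B1, rep_of_mem_Ico ⟨hu.1, hlt⟩, Set.indicator_apply, Set.mem_Icc, abs_le,
      one_div]
  · rw [B1, rep_pi, abs_neg, abs_of_pos Real.pi_pos, if_neg hπ.not_ge,
      Set.indicator_of_notMem fun hmem => hπ.not_ge hmem.2]

theorem convR_B1 {h : ℝ} (h0 : 0 ≤ h) (hπ : h < π) (g : ℝ → ℝ) (x : ℝ) :
    convR (B1 h) g x = (2 * h)⁻¹ * ∫ t in (x - h)..(x + h), g t := by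
  have hπ0 := Real.pi_pos
  have hsub : Set.Icc (-h) h ⊆ Set.Ioc (-π) π := fun t ht =>
    ⟨by linarith [ht.1], by linarith [ht.2]⟩
  calc convR (B1 h) g x
      = ∫ u in (-π)..π, (Set.Icc (-h) h).indicator (fun u => (2 * h)⁻¹ * g (x - u)) u := by
        refine intervalIntegral.integral_congr fun u hu => ?_
        rw [Set.uIcc_of_le (by linarith)] at hu
        simp only [B1_eq_indicator hπ hu, Set.indicator_apply]
        split_ifs <;> simp
    _ = ∫ u in (-h)..h, (2 * h)⁻¹ * g (x - u) := by
        rw [intervalIntegral.integral_of_le (by linarith), setIntegral_indicator measurableSet_Icc,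
          Set.inter_eq_self_of_subset_right hsub, integral_Icc_eq_integral_Ioc,
          ← intervalIntegral.integral_of_le (by linarith)]
    _ = (2 * h)⁻¹ * ∫ t in (x - h)..(x + h), g t := by
        rw [intervalIntegral.integral_const_mul, intervalIntegral.integral_comp_sub_left,
          sub_neg_eq_add]

theorem intervalIntegrable_B1 (h a b : ℝ) : IntervalIntegrable (B1 h) volume a b := by
  have hrep : Measurable rep := by unfold rep; fun_prop
  refine (intervalIntegrable_const (c := |1 / (2 * h)|)).mono_fun ?_
    (Filter.Eventually.of_forall fun x => ?_)
  · exact (Measurable.ite (measurableSet_le hrep.abs measurable_const) measurable_const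
      measurable_const).aestronglyMeasurable
  · simp only [B1, Real.norm_eq_abs, abs_abs]
    split_ifs <;> simp

section Kernel

variable {h : ℝ} (h0 : 0 ≤ h) (hπ : h < π)
include h0 hπ

theorem B_add_two (k : ℕ) :
    B h (k + 2) = fun x => (2 * h)⁻¹ * ∫ t in (x - h)..(x + h), B h (k + 1) t :=
  funext (convR_B1 h0 hπ _)

theorem intervalIntegrable_B (k : ℕ) (a b : ℝ) :
    IntervalIntegrable (B h (k + 1)) volume a b := by
  induction k generalizing a b with
  | zero => exact intervalIntegrable_B1 h a b
  | succ k ih =>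
    rw [B_add_two h0 hπ]
    exact (continuous_const.mul (continuous_integral_window ih h)).intervalIntegrable a b

theorem continuous_B (k : ℕ) : Continuous (B h (k + 2)) := by
  rw [B_add_two h0 hπ]
  exact continuous_const.mul (continuous_integral_window (intervalIntegrable_B h0 hπ k) h)

theorem hasDerivAt_B (k : ℕ) (x : ℝ) :
    HasDerivAt (B h (k + 3)) ((2 * h)⁻¹ * (B h (k + 2) (x + h) - B h (k + 2) (x - h))) x := by
  rw [B_add_two h0 hπ]
  exact (hasDerivAt_integral_window (continuous_B h0 hπ k) h x).const_mul _

theorem contDiff_B {n s : ℕ} (hs : n + 2 ≤ s) : ContDiff ℝ n (B h s) := by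
  induction n generalizing s with
  | zero =>
    obtain ⟨k, rfl⟩ : ∃ k, s = k + 2 := ⟨s - 2, by omega⟩
    exact contDiff_zero.mpr (continuous_B h0 hπ k)
  | succ n ih =>
    obtain ⟨k, rfl⟩ : ∃ k, s = k + 3 := ⟨s - 3, by omega⟩
    have hderiv : deriv (B h (k + 3)) =
        fun x => (2 * h)⁻¹ * (B h (k + 2) (x + h) - B h (k + 2) (x - h)) :=
      funext fun x => (hasDerivAt_B h0 hπ k x).deriv
    have hB : ContDiff ℝ n (B h (k + 2)) := ih (by omega)
    rw [Nat.cast_add_one, contDiff_succ_iff_deriv, hderiv]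
    exact ⟨fun x => (hasDerivAt_B h0 hπ k x).differentiableAt, by simp,
      contDiff_const.mul ((hB.comp (contDiff_id.add contDiff_const)).sub
        (hB.comp (contDiff_id.sub contDiff_const)))⟩

theorem iteratedDeriv_B {m s : ℕ} (hs : m + 2 ≤ s) (x : ℝ) :
    iteratedDeriv m (B h s) x =
      (2 * h) ^ (-(m : ℤ)) * (fwdDiff (2 * h))^[m] (B h (s - m)) (x - m * h) := by
  induction m generalizing x with
  | zero => simp
  | succ m ih =>
    obtain ⟨k, hk⟩ : ∃ k, s - m = k + 3 := ⟨s - m - 3, by omega⟩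
    have hk' : s - (m + 1) = k + 2 := by omega
    have hderiv (y : ℝ) : HasDerivAt (B h (k + 3))
        (((2 * h)⁻¹ • fun y => fwdDiff (2 * h) (B h (k + 2)) (y + -h)) y) y := by
      convert hasDerivAt_B h0 hπ k y using 1
      simp only [fwdDiff, Pi.smul_apply, smul_eq_mul]
      ring_nf
    have hD := ((hasDerivAt_fwdDiff_iter hderiv (2 * h) m (x - m * h)).comp_sub_const x
      (m * h)).const_mul ((2 * h) ^ (-(m : ℤ)))
    rw [iteratedDeriv_succ, funext (ih (by omega)), hk, hk', hD.deriv, fwdDiff_iter_const_smul,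
      Pi.smul_apply, fwdDiff_iter_comp_add, ← Function.iterate_succ_apply, smul_eq_mul]
    rw [show x - m * h + -h = x - ((m + 1 : ℕ) : ℝ) * h by push_cast; ring, zpow_neg, zpow_neg,
      zpow_natCast, zpow_natCast, pow_succ, mul_inv ((2 * h) ^ m), mul_assoc]

end Kernel

theorem stmt6_general (m s : ℕ) (hs : m + 2 ≤ s) (h : ℝ)
    (hpos : 0 < (s : ℝ) * h) (hlt : (s : ℝ) * h < Real.pi) :
    ContDiff ℝ (m : ℕ∞) (B h s) ∧
    ∀ x : ℝ, iteratedDeriv m (B h s) x =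
      (2 * h) ^ (-(m : ℤ)) * deltaR m (2 * h) (B h (s - m)) x := by
  have hs1 : (1 : ℝ) ≤ s := by exact_mod_cast (by omega : 1 ≤ s)
  have h0 : 0 < h := by nlinarith
  have hπ : h < π := by nlinarith
  refine ⟨by exact_mod_cast contDiff_B h0.le hπ hs, fun x => ?_⟩
  rw [iteratedDeriv_B h0.le hπ hs, deltaR_eq_fwdDiff_iter,
    show (m : ℝ) / 2 * (2 * h) = m * h by ring]

/-- For `m ≥ 1`, `s ≥ m + 2`, `0 < sh < π`, the kernel `B_h^s` is `m` times
differentiable and `D^m B_h^s(x) = (2h)^{-m} Δ_{2h}^m B_h^{s-m}(x)`. -/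
theorem stmt6 (m s : ℕ) (hm : 1 ≤ m) (hs : m + 2 ≤ s) (h : ℝ)
    (hpos : 0 < (s : ℝ) * h) (hlt : (s : ℝ) * h < Real.pi) :
    ContDiff ℝ (m : ℕ∞) (B h s) ∧
    ∀ x : ℝ, iteratedDeriv m (B h s) x =
      (2 * h) ^ (-(m : ℤ)) * deltaR m (2 * h) (B h (s - m)) x :=
  stmt6_general m s hs h hpos hlt
end
end

section
/- Let f be a continuous 2π-periodic function, k ≥ 1, s ≥ 1, and 0 < skh < π. Then the smoothing operator w_{x,h,2k}^s has the integral representation w_{x,h,2k}^s f = (−1)^k · C(2k,k)^{−1} · ∫_T Δ_u^{2k} f(x) · B_h^s(u) du, where Δ_u^{2k}f(x) is the 2k-th difference of f at x with step u. -/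
open scoped Real BigOperators
open MeasureTheory

noncomputable section

/-!
For `0 < h < π`, convolution with `B_h^1` on the circle is the Steklov average
`(2h)⁻¹ ∫_{-h}^{h} G(x + u) du`, so `I_{x,δ}^s f` is the `s`-fold iterated Steklov average of `f`
with step `δ`. Substituting `u ↦ c u` turns the `s`-fold average of `f` at `x` with step `c h`
into the `s`-fold average of `u ↦ f(x + c u)` with step `h`; for an integer `c` this function is
again `2π`-periodic, so the latter average is its convolution with `B_h^s`, i.e.
`∫_T f(x + c u) B_h^s(u) du`. Expanding `Δ_u^{2k} f(x)` and taking `c = i - k` matches the two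
sides term by term.
-/

open intervalIntegral Set Function

lemma rep_add_two_pi (x : ℝ) : rep (x + 2 * π) = rep x := by
  have : (x + 2 * π + π) / (2 * π) = (x + π) / (2 * π) + 1 := by field_simp; ring
  simp only [rep, this, Int.floor_add_one]
  push_cast
  ring

lemma rep_of_mem_Ico_s7 {x : ℝ} (hx : x ∈ Ico (-π) π) : rep x = x := by
  have : ⌊(x + π) / (2 * π)⌋ = 0 := by
    rw [Int.floor_eq_zero_iff, mem_Ico, le_div_iff₀ (by positivity), div_lt_one (by positivity)]
    constructor <;> linarith [hx.1, hx.2]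
  simp [rep, this]

lemma measurable_rep : Measurable rep :=
  measurable_id.sub (measurable_const.mul
    (measurable_from_top.comp ((measurable_id.add_const π).div_const _).floor))

lemma measurable_B1 (h : ℝ) : Measurable (B1 h) :=
  Measurable.ite (measurableSet_le measurable_rep.abs measurable_const)
    measurable_const measurable_const

lemma abs_B1_le (h x : ℝ) : |B1 h x| ≤ |1 / (2 * h)| := by
  unfold B1
  split_ifs <;> simp

lemma B1_periodic (h : ℝ) : Periodic (B1 h) (2 * π) := fun x => by
  simp only [B1, rep_add_two_pi]

lemma B1_eq_indicator_s7 {h x : ℝ} (hx : x ∈ Ico (-π) π) :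
    B1 h x = (Icc (-h) h).indicator (fun _ => 1 / (2 * h)) x := by
  simp only [B1, rep_of_mem_Ico_s7 hx, indicator, mem_Icc, ← abs_le]

lemma measurable_B (h : ℝ) : ∀ s, Measurable (B h s)
  | 0 => measurable_const
  | 1 => measurable_B1 h
  | s + 2 => by
    have hint : StronglyMeasurable (uncurry fun x u => B1 h u * B h (s + 1) (x - u)) :=
      ((measurable_B1 h).comp measurable_snd).mul
        ((measurable_B h (s + 1)).comp (measurable_fst.sub measurable_snd)) |>.stronglyMeasurable
    change Measurable fun x => ∫ u in (-π)..π, B1 h u * B h (s + 1) (x - u)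
    simp only [integral_of_le (neg_le_self Real.pi_pos.le)]
    exact (hint.integral_prod_right' (ν := volume.restrict (Ioc (-π) π))).measurable

lemma exists_abs_B_le (h : ℝ) : ∀ s, ∃ M, ∀ x, |B h s x| ≤ M
  | 0 => ⟨0, fun x => by simp [B]⟩
  | 1 => ⟨_, abs_B1_le h⟩
  | s + 2 => by
    obtain ⟨M, hM⟩ := exists_abs_B_le h (s + 1)
    refine ⟨|1 / (2 * h)| * M * |π - -π|, fun x => ?_⟩
    have hbound : ∀ u ∈ uIoc (-π) π, ‖B1 h u * B h (s + 1) (x - u)‖ ≤ |1 / (2 * h)| * M :=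
      fun u _ => by
        simpa only [Real.norm_eq_abs, abs_mul] using
          mul_le_mul (abs_B1_le h u) (hM _) (abs_nonneg _) (abs_nonneg _)
    exact (Real.norm_eq_abs _).symm.trans_le (norm_integral_le_of_norm_le_const hbound)

lemma intervalIntegrable_mul_B {g : ℝ → ℂ} (hg : Continuous g) (h : ℝ) (s : ℕ) (a b : ℝ) :
    IntervalIntegrable (fun u => g u * (B h s u : ℂ)) volume a b := by
  obtain ⟨M, hM⟩ := exists_abs_B_le h s
  have hB : IntervalIntegrable (fun u => (B h s u : ℂ)) volume a b := by
    refine (intervalIntegrable_iff.2 (Measure.integrableOn_of_bounded measure_Ioc_lt_top.ne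
      (measurable_B h s).complex_ofReal.aestronglyMeasurable (M := M) (ae_of_all _ fun u => ?_)))
    simpa only [Complex.norm_real, Real.norm_eq_abs] using hM u
  exact hB.continuousOn_mul hg.continuousOn

def steklov (h : ℝ) (G : ℝ → ℂ) (x : ℝ) : ℂ := (2 * h)⁻¹ * ∫ u in (-h)..h, G (x + u)

lemma steklov_neg (h : ℝ) : steklov (-h) = steklov h := by
  ext G x
  rw [steklov, steklov, neg_neg, integral_symm]
  push_cast
  ring

lemma steklov_abs (h : ℝ) : steklov |h| = steklov h := by
  rcases abs_choice h with h' | h' <;> rw [h']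
  exact steklov_neg h

lemma steklov_const {h : ℝ} (hh : h ≠ 0) (a : ℂ) (x : ℝ) : steklov h (fun _ => a) x = a := by
  have hh' : (h : ℂ) ≠ 0 := by exact_mod_cast hh
  simp only [steklov, intervalIntegral.integral_const, sub_neg_eq_add, Complex.real_smul]
  push_cast
  field_simp
  ring

lemma iterate_steklov_const {h : ℝ} (hh : h ≠ 0) (a : ℂ) (s : ℕ) :
    (steklov h)^[s] (fun _ => a) = fun _ => a :=
  iterate_fixed (funext (steklov_const hh a)) s

lemma steklov_comp_add_mul {c : ℝ} (hc : c ≠ 0) (h : ℝ) (G : ℝ → ℂ) (a t : ℝ) :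
    steklov h (fun t => G (a + c * t)) t = steklov (c * h) G (a + c * t) := by
  have hsub := integral_comp_mul_left (fun v => G (a + c * t + v)) (a := -h) (b := h) hc
  simp only [mul_neg] at hsub
  simp only [steklov, mul_add, ← add_assoc, hsub, Complex.real_smul]
  push_cast
  field_simp

lemma iterate_steklov_comp_add_mul {c : ℝ} (hc : c ≠ 0) (h : ℝ) (G : ℝ → ℂ) (a : ℝ) (s : ℕ) :
    (steklov h)^[s] (fun t => G (a + c * t)) = fun t => (steklov (c * h))^[s] G (a + c * t) := by
  induction s with
  | zero => rfl
  | succ s ih =>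
    ext t
    rw [iterate_succ_apply', iterate_succ_apply', ih, steklov_comp_add_mul hc]

lemma integral_B1_mul {h : ℝ} (hh : 0 < h) (hπ : h < π) (G : ℝ → ℂ) :
    ∫ v in (-π)..π, (B1 h v : ℂ) * G v = (2 * h)⁻¹ * ∫ v in (-h)..h, G v := by
  have hsub : Icc (-h) h ⊆ Ioc (-π) π := Icc_subset_Ioc (by linarith) hπ.le
  have hae : ∀ᵐ v ∂volume.restrict (Ioc (-π) π),
      (B1 h v : ℂ) * G v = (Icc (-h) h).indicator (fun v => (((2 * h)⁻¹ : ℝ) : ℂ) * G v) v := by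
    -- `B1_eq_indicator` fails only at `v = π`, where `rep π = -π`.
    filter_upwards [ae_restrict_mem measurableSet_Ioc, ae_restrict_of_ae (volume.ae_ne π)]
      with v hv hvπ
    rw [B1_eq_indicator_s7 ⟨hv.1.le, lt_of_le_of_ne hv.2 hvπ⟩]
    by_cases hvh : v ∈ Icc (-h) h <;> simp [hvh]
  rw [integral_of_le (by linarith), integral_of_le (by linarith), integral_congr_ae hae,
    MeasureTheory.integral_indicator measurableSet_Icc, Measure.restrict_restrict measurableSet_Icc,
    inter_eq_left.2 hsub, integral_Icc_eq_integral_Ioc, MeasureTheory.integral_const_mul]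

lemma integral_B1_mul_comp_sub {h : ℝ} (hh : 0 < h) (hπ : h < π) (G : ℝ → ℂ) (x : ℝ) :
    ∫ v in (-π)..π, (B1 h v : ℂ) * G (x - v) = steklov h G x := by
  rw [integral_B1_mul hh hπ, steklov, ← neg_neg h, ← integral_comp_neg]
  simp [sub_eq_add_neg]

lemma Function.Periodic.intervalIntegral_comp_sub_left {E : Type*} [NormedAddCommGroup E]
    [NormedSpace ℝ E] {φ : ℝ → E} {T : ℝ} (hφ : Periodic φ T) (x a : ℝ) :
    ∫ v in a..a + T, φ (x - v) = ∫ u in a..a + T, φ u := by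
  rw [integral_comp_sub_left, ← hφ.intervalIntegral_add_eq (x - (a + T)) a]
  ring_nf

lemma convC_B_one {F : ℝ → ℂ} (hF : Periodic F (2 * π)) (h x : ℝ) :
    convC (B h 1) F x = ∫ v in (-π)..π, (B1 h v : ℂ) * F (x - v) := by
  have hφ : Periodic (fun u => F u * (B1 h (x - u) : ℂ)) (2 * π) := fun u => by
    simp only [hF u, sub_add_eq_sub_sub, (B1_periodic h).sub_eq]
  have := hφ.intervalIntegral_comp_sub_left x (-π)
  rw [show -π + 2 * π = π by ring] at this
  simp only [convC, B, ← this, sub_sub_cancel, mul_comm]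

lemma convC_B_add_two {F : ℝ → ℂ} (hFm : Measurable F) {C : ℝ} (hFC : ∀ u, ‖F u‖ ≤ C)
    (h : ℝ) (s : ℕ) (x : ℝ) :
    convC (B h (s + 2)) F x = ∫ v in (-π)..π, (B1 h v : ℂ) * convC (B h (s + 1)) F (x - v) := by
  obtain ⟨M, hM⟩ := exists_abs_B_le h (s + 1)
  have hint : IntegrableOn
      (uncurry fun u v => F u * ((B1 h v : ℂ) * (B h (s + 1) (x - u - v) : ℂ)))
      (uIoc (-π) π ×ˢ uIoc (-π) π) := by
    refine .of_bound ((Metric.isBounded_Ioc _ _).prod (Metric.isBounded_Ioc _ _)).measure_lt_top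
      ?_ (C * (|1 / (2 * h)| * M)) (ae_of_all _ fun p => ?_)
    · have := measurable_B1 h
      have := measurable_B h (s + 1)
      exact Measurable.aestronglyMeasurable (by unfold uncurry; fun_prop)
    · simp only [uncurry, norm_mul, Complex.norm_real, Real.norm_eq_abs]
      exact mul_le_mul (hFC _) (mul_le_mul (abs_B1_le h _) (hM _) (abs_nonneg _) (abs_nonneg _))
        (by positivity) ((norm_nonneg _).trans (hFC 0))
  have hinner : ∀ u, (B h (s + 2) (x - u) : ℂ) =
      ∫ v in (-π)..π, (B1 h v : ℂ) * (B h (s + 1) (x - u - v) : ℂ) := fun u => by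
    change ((∫ v in (-π)..π, B1 h v * B h (s + 1) (x - u - v) : ℝ) : ℂ) = _
    rw [← intervalIntegral.integral_ofReal]
    push_cast
    rfl
  simp only [convC, hinner, ← intervalIntegral.integral_const_mul]
  rw [intervalIntegral_intervalIntegral_swap hint]
  refine integral_congr fun v _ => integral_congr fun u _ => ?_
  simp only [sub_right_comm x u v]
  ring

lemma convC_B_eq_iterate_steklov {F : ℝ → ℂ} (hF : Continuous F) (hper : Periodic F (2 * π))
    {h : ℝ} (hh : 0 < h) (hπ : h < π) : ∀ s, convC (B h (s + 1)) F = (steklov h)^[s + 1] F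
  | 0 => funext fun x => by rw [convC_B_one hper, integral_B1_mul_comp_sub hh hπ]; rfl
  | s + 1 => funext fun x => by
    obtain ⟨C, hC⟩ := isBounded_iff_forall_norm_le.1
      (hper.isBounded_of_continuous (by positivity) hF)
    rw [convC_B_add_two hF.measurable (fun u => hC _ (mem_range_self u)),
      convC_B_eq_iterate_steklov hF hper hh hπ s, integral_B1_mul_comp_sub hh hπ,
      iterate_succ_apply' (steklov h) (s + 1)]

lemma Iop_eq_iterate_steklov {f : ℝ → ℂ} (hf : Continuous f) (hper : Periodic f (2 * π))
    {δ : ℝ} (hδ : δ ≠ 0) (hδπ : |δ| < π) (s : ℕ) (x : ℝ) :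
    Iop x δ (s + 1) f = (steklov δ)^[s + 1] f x := by
  rw [Iop, if_neg (by simp [hδ]), convC_B_eq_iterate_steklov hf hper (abs_pos.2 hδ) hδπ,
    steklov_abs]

lemma integral_comp_add_mul_mul_B {f : ℝ → ℂ} (hf : Continuous f) (hper : Periodic f (2 * π))
    {h : ℝ} (hh : 0 < h) (hπ : h < π) {s : ℕ} (hs : s ≠ 0) {c : ℤ} (hc : |c| * h < π) (x : ℝ) :
    ∫ u in (-π)..π, f (x + c * u) * (B h s u : ℂ) = Iop x (c * h) s f := by
  obtain ⟨s, rfl⟩ := Nat.exists_eq_succ_of_ne_zero hs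
  set g : ℝ → ℂ := fun u => f (x + (-c : ℝ) * u)
  have hg : Continuous g := by fun_prop
  have hgper : Periodic g (2 * π) := fun u => by
    simp only [g, show x + -c * (u + 2 * π) = x + -c * u + (-c : ℤ) * (2 * π) by push_cast; ring,
      hper.int_mul (-c) _]
  have hreflect : ∫ u in (-π)..π, f (x + c * u) * (B h (s + 1) u : ℂ) =
      convC (B h (s + 1)) g 0 := by
    have := integral_comp_neg (a := -π) (b := π) fun u => g u * (B h (s + 1) (0 - u) : ℂ)
    rw [neg_neg] at this
    rw [convC, ← this]
    simp only [g, zero_sub, neg_neg, neg_mul_neg]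
  rw [hreflect, convC_B_eq_iterate_steklov hg hgper hh hπ]
  rcases eq_or_ne c 0 with rfl | hc0
  · simp [g, iterate_steklov_const hh.ne', Iop]
  · have hc0' : (-c : ℝ) ≠ 0 := by exact_mod_cast neg_ne_zero.2 hc0
    rw [iterate_steklov_comp_add_mul hc0', Iop_eq_iterate_steklov hf hper
      (mul_ne_zero (by exact_mod_cast hc0) hh.ne') (by rwa [abs_mul, abs_of_pos hh, ← Int.cast_abs])]
    simp [neg_mul, steklov_neg]

lemma deltaC_two_mul (k : ℕ) (u : ℝ) (f : ℝ → ℂ) (x : ℝ) :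
    deltaC (2 * k) u f x = ∑ i ∈ Finset.range (2 * k + 1),
      (-1 : ℂ) ^ (2 * k - i) * (Nat.choose (2 * k) i : ℂ) * f (x + ((i : ℝ) - k) * u) := by
  refine Finset.sum_congr rfl fun i _ => ?_
  push_cast
  ring_nf

lemma neg_one_zpow_sub_eq {k i : ℕ} (hi : i ≤ 2 * k) :
    (-1 : ℂ) ^ ((k : ℤ) - i) = (-1) ^ k * (-1) ^ (2 * k - i) := by
  rw [← zpow_natCast, ← zpow_natCast, ← zpow_add₀ (by norm_num), Nat.cast_sub hi,
    show (k : ℤ) + ((2 * k : ℕ) - i) = ((k : ℤ) - i) + 2 * k by push_cast; ring,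
    zpow_add₀ (by norm_num), zpow_mul]
  norm_num

lemma integral_deltaC_two_mul_mul_B {f : ℝ → ℂ} (hf : Continuous f) (k : ℕ) (h : ℝ) (s : ℕ)
    (x : ℝ) :
    ∫ u in (-π)..π, deltaC (2 * k) u f x * (B h s u : ℂ) = ∑ i ∈ Finset.range (2 * k + 1),
      (-1 : ℂ) ^ (2 * k - i) * (Nat.choose (2 * k) i : ℂ) *
        ∫ u in (-π)..π, f (x + ((i : ℝ) - k) * u) * (B h s u : ℂ) := by
  simp only [deltaC_two_mul, Finset.sum_mul]
  rw [intervalIntegral.integral_finsetSum fun i _ => intervalIntegrable_mul_B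
    (g := fun u => (-1 : ℂ) ^ (2 * k - i) * (Nat.choose (2 * k) i : ℂ) * f (x + (i - k) * u))
    (by fun_prop) h s _ _]
  refine Finset.sum_congr rfl fun i _ => ?_
  rw [← intervalIntegral.integral_const_mul]
  exact integral_congr fun u _ => by ring

theorem stmt7_general (f : ℝ → ℂ) (hf : Continuous f) (hper : Function.Periodic f (2 * Real.pi))
    (k s : ℕ) (h : ℝ) (hpos : 0 < (s : ℝ) * (k : ℝ) * h)
    (hlt : (s : ℝ) * (k : ℝ) * h < Real.pi) (x : ℝ) :
    wop x h k s f = (-1 : ℂ) ^ k * ((Nat.choose (2 * k) k : ℂ))⁻¹ *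
      ∫ u in (-Real.pi)..Real.pi, deltaC (2 * k) u f x * ((B h s u : ℝ) : ℂ) := by
  have hs : s ≠ 0 := by rintro rfl; simp at hpos
  have hkh : 0 < (k : ℝ) * h := pos_of_mul_pos_right (by rwa [← mul_assoc]) (by positivity)
  have hkπ : (k : ℝ) * h < π := (le_mul_of_one_le_left hkh.le
    (Nat.one_le_cast.2 (Nat.pos_of_ne_zero hs))).trans_lt (by rwa [← mul_assoc])
  have hh : 0 < h := pos_of_mul_pos_right hkh (Nat.cast_nonneg k)
  have hk : k ≠ 0 := by rintro rfl; simp at hkh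
  have hπ : h < π :=
    (le_mul_of_one_le_left hh.le (Nat.one_le_cast.2 (Nat.pos_of_ne_zero hk))).trans_lt hkπ
  rw [wop, integral_deltaC_two_mul_mul_B hf, Finset.mul_sum]
  refine Finset.sum_congr rfl fun i hi => ?_
  replace hi := Finset.mem_range_succ_iff.1 hi
  have hik : |(i : ℤ) - k| ≤ k := abs_sub_le_iff.2 ⟨by omega, by omega⟩
  replace hik : ((|(i : ℤ) - k| : ℤ) : ℝ) ≤ k := by exact_mod_cast hik
  have hterm := integral_comp_add_mul_mul_B hf hper hh hπ hs (c := (i : ℤ) - k)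
    ((mul_le_mul_of_nonneg_right hik hh.le).trans_lt hkπ) x
  push_cast at hterm
  rw [neg_one_zpow_sub_eq hi, ← hterm]
  ring

/-- Integral representation of the smoothing operator:
`w_{x,h,2k}^s f = (-1)^k C(2k,k)⁻¹ ∫_T Δ_u^{2k} f(x) B_h^s(u) du`. -/
theorem stmt7 (f : ℝ → ℂ) (hf : Continuous f) (hper : Function.Periodic f (2 * Real.pi))
    (k s : ℕ) (hk : 1 ≤ k) (hs : 1 ≤ s) (h : ℝ) (hpos : 0 < (s : ℝ) * (k : ℝ) * h)
    (hlt : (s : ℝ) * (k : ℝ) * h < Real.pi) (x : ℝ) :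
    wop x h k s f = (-1 : ℂ) ^ k * ((Nat.choose (2 * k) k : ℂ))⁻¹ *
      ∫ u in (-Real.pi)..Real.pi, deltaC (2 * k) u f x * ((B h s u : ℝ) : ℂ) :=
  stmt7_general f hf hper k s h hpos hlt x
end
end

section
/- Let f be a continuous 2π-periodic function, k ≥ 1, m ≥ 1, and δ > 0. Then the de la Vallée Poussin mean v_{k,m}f satisfies ω_{2k}(v_{k,m}f, δ) ≤ (2k+1) · ω_{2k}(f, δ). -/
open scoped Real BigOperators
open MeasureTheory

noncomputable section

/-!
The difference `Δ_h^n` is a combination of translates, and the partial sums `s_i` commute with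
translations, so `Δ_h^n (v_{k,m} f) = v_{k,m} (Δ_h^n f)`. Next, `m · v_{k,m} = Σ_{i<(k+1)m} s_i -
Σ_{i<km} s_i`, and `Σ_{i<N} s_i g` is the convolution of `g` with `|Σ_{j<N} e^{ijv}|²`, a
nonnegative kernel of mass `2πN`, so `‖Σ_{i<N} s_i g‖ ≤ N ‖g‖`. Hence
`‖v_{k,m} g‖ ≤ ((k+1)m + km)/m · ‖g‖ = (2k+1) ‖g‖`, which we apply to `g = Δ_h^{2k} f`,
bounded by `ω_{2k}(f, δ)` whenever `|h| < δ`.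
-/

open Complex Finset

def dirichletKernel (i : ℕ) (v : ℝ) : ℂ :=
  ∑ l ∈ Icc (-(i : ℤ)) i, exp (l * v * I)

/-- `N` times the classical Fejér kernel, written as a square modulus to make it visibly
nonnegative. -/
def fejerKernel (N : ℕ) (v : ℝ) : ℝ :=
  normSq (∑ j ∈ range N, exp (j * v * I))

theorem sum_range_sum_Icc_eq_sum_range_sum_range {M : Type*} [AddCommMonoid M] (F : ℤ → M)
    (N : ℕ) :
    ∑ i ∈ range N, ∑ l ∈ Icc (-(i : ℤ)) i, F l = ∑ a ∈ range N, ∑ b ∈ range N, F (a - b) := by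
  rw [sum_sigma', ← sum_product']
  symm
  refine sum_nbij' (fun p => ⟨max p.1 p.2, (p.1 : ℤ) - p.2⟩)
    (fun q => ((q.1 + min q.2 0).toNat, (q.1 - max q.2 0).toNat)) ?_ ?_ ?_ ?_ (fun _ _ => rfl)
  all_goals
    rintro ⟨_, _⟩ h
    simp only [mem_product, mem_range, mem_sigma, mem_Icc, Prod.mk.injEq, Sigma.mk.injEq,
      heq_eq_eq] at h ⊢
    omega

theorem sum_range_dirichletKernel (N : ℕ) (v : ℝ) :
    ∑ i ∈ range N, dirichletKernel i v = fejerKernel N v := by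
  rw [fejerKernel, ← mul_conj, map_sum, sum_mul_sum]
  simp only [dirichletKernel]
  rw [sum_range_sum_Icc_eq_sum_range_sum_range (fun l : ℤ => exp (l * v * I))]
  refine sum_congr rfl fun a _ => sum_congr rfl fun b _ => ?_
  rw [← exp_conj, ← exp_add]
  simp only [map_mul, conj_natCast, conj_ofReal, conj_I]
  push_cast
  ring_nf

theorem fejerKernel_nonneg (N : ℕ) (v : ℝ) : 0 ≤ fejerKernel N v := normSq_nonneg _

@[fun_prop]
theorem continuous_dirichletKernel (i : ℕ) : Continuous (dirichletKernel i) := by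
  unfold dirichletKernel; fun_prop

@[fun_prop]
theorem continuous_fejerKernel (N : ℕ) : Continuous (fejerKernel N) := by
  unfold fejerKernel; fun_prop

theorem integral_exp_int_mul_I (l : ℤ) :
    ∫ u in -π..π, exp (l * u * I) = if l = 0 then (2 * π : ℂ) else 0 := by
  split_ifs with hl
  · simp only [hl, Int.cast_zero, zero_mul, exp_zero, intervalIntegral.integral_const,
      sub_neg_eq_add, real_smul, ofReal_add, mul_one]
    ring
  · have hc : (l : ℂ) * I ≠ 0 := mul_ne_zero (Int.cast_ne_zero.mpr hl) I_ne_zero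
    simp_rw [mul_comm _ I, ← mul_assoc, mul_comm I]
    rw [integral_exp_mul_complex hc, div_eq_zero_iff, sub_eq_zero]
    left
    rw [show (l : ℂ) * I * (π : ℝ) = l * I * (-π : ℝ) + l * (2 * π * I) by push_cast; ring,
      exp_add, exp_int_mul_two_pi_mul_I, mul_one]

theorem integral_dirichletKernel_sub (i : ℕ) (x : ℝ) :
    ∫ u in -π..π, dirichletKernel i (x - u) = 2 * π := by
  have hsplit : ∀ (l : ℤ) (u : ℝ),
      exp (l * (x - u : ℝ) * I) = exp (l * x * I) * exp ((-l : ℤ) * u * I) := by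
    intro l u
    rw [← exp_add]
    push_cast
    ring_nf
  simp only [dirichletKernel, hsplit]
  rw [intervalIntegral.integral_finsetSum fun l _ =>
    Continuous.intervalIntegrable (by fun_prop) _ _]
  simp only [intervalIntegral.integral_const_mul, integral_exp_int_mul_I, neg_eq_zero, mul_ite,
    mul_zero]
  rw [sum_ite_eq' _ 0]
  simp

theorem integral_fejerKernel_sub (N : ℕ) (x : ℝ) :
    ∫ u in -π..π, fejerKernel N (x - u) = 2 * π * N := by
  have h : ∫ u in -π..π, (fejerKernel N (x - u) : ℂ) = 2 * π * N := by
    simp only [← sum_range_dirichletKernel]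
    rw [intervalIntegral.integral_finsetSum fun i _ =>
      Continuous.intervalIntegrable (by fun_prop) _ _]
    rw [sum_congr rfl fun i _ => integral_dirichletKernel_sub i x]
    simp [mul_comm]
  rw [intervalIntegral.integral_ofReal] at h
  exact_mod_cast h

theorem PS_eq_integral_dirichletKernel {f : ℝ → ℂ} (hf : IntervalIntegrable f volume (-π) π)
    (i : ℕ) (x : ℝ) :
    PS i f x = 1 / (2 * π) * ∫ u in -π..π, f u * dirichletKernel i (x - u) := by
  have hterm : ∀ l : ℤ, fc f l * exp (l * x * I) =
      1 / (2 * π) * ∫ u in -π..π, f u * exp (l * (x - u : ℝ) * I) := by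
    intro l
    rw [fc, mul_assoc, ← intervalIntegral.integral_mul_const]
    congr 1
    refine intervalIntegral.integral_congr fun u _ => ?_
    rw [mul_assoc, ← exp_add]
    push_cast
    ring_nf
  simp only [PS, hterm, dirichletKernel, mul_sum]
  rw [intervalIntegral.integral_finsetSum fun l _ => hf.mul_continuousOn (by fun_prop), mul_sum]

theorem sum_range_PS_eq_integral_fejerKernel {f : ℝ → ℂ}
    (hf : IntervalIntegrable f volume (-π) π) (N : ℕ) (x : ℝ) :
    ∑ i ∈ range N, PS i f x = 1 / (2 * π) * ∫ u in -π..π, f u * fejerKernel N (x - u) := by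
  simp only [PS_eq_integral_dirichletKernel hf, ← mul_sum, ← sum_range_dirichletKernel]
  simp only [mul_sum (s := range N)]
  rw [intervalIntegral.integral_finsetSum (f := fun i u => f u * dirichletKernel i (x - u))
    fun i _ => hf.mul_continuousOn (by fun_prop), mul_sum]

theorem norm_sum_range_PS_le {f : ℝ → ℂ} (hf : IntervalIntegrable f volume (-π) π) {M : ℝ}
    (hM : ∀ u, ‖f u‖ ≤ M) (N : ℕ) (x : ℝ) :
    ‖∑ i ∈ range N, PS i f x‖ ≤ N * M := by
  have hK : Continuous fun u => fejerKernel N (x - u) := by fun_prop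
  have hbound : ‖∫ u in -π..π, f u * fejerKernel N (x - u)‖ ≤
      ∫ u in -π..π, M * fejerKernel N (x - u) := by
    refine intervalIntegral.norm_integral_le_of_norm_le (by linarith [Real.pi_pos])
      (Filter.Eventually.of_forall fun u _ => ?_) ((hK.const_mul M).intervalIntegrable _ _)
    rw [norm_mul, Complex.norm_real, Real.norm_of_nonneg (fejerKernel_nonneg _ _)]
    exact mul_le_mul_of_nonneg_right (hM u) (fejerKernel_nonneg _ _)
  rw [intervalIntegral.integral_const_mul, integral_fejerKernel_sub] at hbound
  have hnorm : ‖(1 / (2 * π) : ℂ)‖ = 1 / (2 * π) := by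
    rw [← Complex.ofReal_ofNat, ← Complex.ofReal_mul, ← Complex.ofReal_one, ← Complex.ofReal_div,
      Complex.norm_real, Real.norm_of_nonneg (by positivity)]
  rw [sum_range_PS_eq_integral_fejerKernel hf, norm_mul, hnorm]
  calc 1 / (2 * π) * ‖∫ u in -π..π, f u * fejerKernel N (x - u)‖
      ≤ 1 / (2 * π) * (M * (2 * π * N)) := by gcongr
    _ = N * M := by field_simp

theorem norm_VP_le {f : ℝ → ℂ} (hf : IntervalIntegrable f volume (-π) π) {M : ℝ}
    (hM : ∀ u, ‖f u‖ ≤ M) (k m : ℕ) (x : ℝ) :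
    ‖VP k m f x‖ ≤ (2 * k + 1) * M := by
  have hM0 : 0 ≤ M := (norm_nonneg _).trans (hM 0)
  rcases Nat.eq_zero_or_pos m with rfl | hm
  · rw [VP, Nat.cast_zero, div_zero, zero_mul, norm_zero]
    positivity
  rw [VP, sum_Ico_eq_sub _ (Nat.mul_le_mul_right m k.le_succ), norm_mul, norm_div, norm_one,
    Complex.norm_natCast]
  calc 1 / (m : ℝ) * ‖∑ i ∈ range ((k + 1) * m), PS i f x - ∑ i ∈ range (k * m), PS i f x‖
      ≤ 1 / m * (((k + 1) * m : ℕ) * M + (k * m : ℕ) * M) := by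
        gcongr
        exact (norm_sub_le _ _).trans
          (add_le_add (norm_sum_range_PS_le hf hM _ x) (norm_sum_range_PS_le hf hM _ x))
    _ = (2 * k + 1) * M := by push_cast; field_simp; ring

theorem periodic_exp_int_mul_I (j : ℤ) :
    Function.Periodic (fun w : ℝ => exp (j * w * I)) (2 * π) := by
  intro w
  dsimp only
  rw [show (j : ℂ) * ((w + 2 * π : ℝ) : ℂ) * I = j * w * I + j * (2 * π * I) by push_cast; ring,
    exp_add, exp_int_mul_two_pi_mul_I, mul_one]

theorem intervalIntegral_comp_add_right_of_periodic {F : ℝ → ℂ}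
    (hF : Function.Periodic F (2 * π)) (a : ℝ) :
    ∫ u in -π..π, F (u + a) = ∫ u in -π..π, F u := by
  rw [intervalIntegral.integral_comp_add_right]
  convert hF.intervalIntegral_add_eq (-π + a) (-π) using 2 <;> ring

theorem fc_comp_add_right {f : ℝ → ℂ} (hf : Function.Periodic f (2 * π)) (a : ℝ) (j : ℤ) :
    fc (fun u => f (u + a)) j = exp (j * a * I) * fc f j := by
  set F : ℝ → ℂ := fun w => f w * exp ((-j : ℤ) * (w - a : ℝ) * I)
  have hF : Function.Periodic F (2 * π) := hf.mul ((periodic_exp_int_mul_I (-j)).sub_const a)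
  have hshift : ∫ u in -π..π, f (u + a) * exp (-j * u * I) = ∫ u in -π..π, F (u + a) := by
    simp [F]
  rw [fc, fc, hshift, intervalIntegral_comp_add_right_of_periodic hF,
    mul_left_comm (exp _)]
  congr 1
  rw [← intervalIntegral.integral_const_mul]
  refine intervalIntegral.integral_congr fun u _ => ?_
  simp only [F]
  rw [mul_left_comm, ← exp_add]
  push_cast
  ring_nf

theorem PS_comp_add_right {f : ℝ → ℂ} (hf : Function.Periodic f (2 * π)) (i : ℕ) (a x : ℝ) :
    PS i (fun u => f (u + a)) x = PS i f (x + a) := by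
  refine sum_congr rfl fun j _ => ?_
  rw [fc_comp_add_right hf, Complex.ofReal_add, mul_add, add_mul, exp_add]
  ring

theorem fc_sum {ι : Type*} (s : Finset ι) (c : ι → ℂ) {F : ι → ℝ → ℂ}
    (hF : ∀ t ∈ s, IntervalIntegrable (F t) volume (-π) π) (j : ℤ) :
    fc (fun u => ∑ t ∈ s, c t * F t u) j = ∑ t ∈ s, c t * fc (F t) j := by
  simp only [fc, sum_mul]
  rw [intervalIntegral.integral_finsetSum fun t ht =>
    (((hF t ht).const_mul (c t)).mul_continuousOn (by fun_prop))]
  simp only [mul_sum, mul_assoc, intervalIntegral.integral_const_mul]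
  exact sum_congr rfl fun t _ => mul_left_comm _ _ _

theorem PS_sum {ι : Type*} (s : Finset ι) (c : ι → ℂ) {F : ι → ℝ → ℂ}
    (hF : ∀ t ∈ s, IntervalIntegrable (F t) volume (-π) π) (i : ℕ) (x : ℝ) :
    PS i (fun u => ∑ t ∈ s, c t * F t u) x = ∑ t ∈ s, c t * PS i (F t) x := by
  simp only [PS, fc_sum s c hF, sum_mul, mul_sum]
  rw [sum_comm]
  simp only [mul_assoc]

theorem intervalIntegrable_comp_add_right_of_periodic {f : ℝ → ℂ}
    (hper : Function.Periodic f (2 * π)) (hf : IntervalIntegrable f volume (-π) π) (a : ℝ) :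
    IntervalIntegrable (fun u => f (u + a)) volume (-π) π := by
  have hf' : IntervalIntegrable f volume (-π) (-π + 2 * π) := by
    rwa [neg_add_eq_sub, two_mul, add_sub_cancel_right]
  simpa using (hper.intervalIntegrable Real.two_pi_pos.ne' hf' (-π + a) (π + a)).comp_add_right a

theorem deltaC_PS {f : ℝ → ℂ} (hf : IntervalIntegrable f volume (-π) π)
    (hper : Function.Periodic f (2 * π)) (n : ℕ) (h : ℝ) (i : ℕ) (x : ℝ) :
    deltaC n h (PS i f) x = PS i (deltaC n h f) x := by
  have htranslate : ∀ t : ℕ,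
      (fun u => f (u - n / 2 * h + t * h)) = fun u => f (u + (t * h - n / 2 * h)) := by
    intro t
    ext u
    ring_nf
  unfold deltaC
  rw [PS_sum _ _ fun t _ => htranslate t ▸ intervalIntegrable_comp_add_right_of_periodic hper hf _]
  refine sum_congr rfl fun t _ => ?_
  rw [htranslate, PS_comp_add_right hper]
  ring_nf

theorem deltaC_VP {f : ℝ → ℂ} (hf : IntervalIntegrable f volume (-π) π)
    (hper : Function.Periodic f (2 * π)) (n : ℕ) (h : ℝ) (k m : ℕ) (x : ℝ) :
    deltaC n h (VP k m f) x = VP k m (deltaC n h f) x := by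
  simp only [VP, ← deltaC_PS hf hper, deltaC, mul_sum]
  rw [sum_comm]
  exact sum_congr rfl fun t _ => sum_congr rfl fun i _ => by ring

theorem continuous_deltaC {f : ℝ → ℂ} (hf : Continuous f) (n : ℕ) (h : ℝ) :
    Continuous (deltaC n h f) := by
  unfold deltaC; fun_prop

theorem norm_deltaC_le {f : ℝ → ℂ} {C : ℝ} (hC : ∀ x, ‖f x‖ ≤ C) (n : ℕ) (h x : ℝ) :
    ‖deltaC n h f x‖ ≤ 2 ^ n * C := by
  calc ‖deltaC n h f x‖ ≤ ∑ t ∈ range (n + 1), (n.choose t : ℝ) * C := by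
        refine (norm_sum_le _ _).trans (sum_le_sum fun t _ => ?_)
        rw [norm_mul, norm_mul, norm_pow, norm_neg, norm_one, one_pow, one_mul,
          Complex.norm_natCast]
        exact mul_le_mul_of_nonneg_left (hC _) (Nat.cast_nonneg _)
    _ = 2 ^ n * C := by rw [← sum_mul, ← Nat.cast_sum, Nat.sum_range_choose]; push_cast; rfl

theorem modulus_nonneg (n : ℕ) (f : ℝ → ℂ) (δ : ℝ) : 0 ≤ modulus n f δ :=
  Real.sSup_nonneg (by rintro _ ⟨x, h, -, rfl⟩; exact norm_nonneg _)

theorem norm_deltaC_le_modulus {f : ℝ → ℂ} (hf : Continuous f)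
    (hper : Function.Periodic f (2 * π)) (n : ℕ) {h δ : ℝ} (hh : |h| < δ) (x : ℝ) :
    ‖deltaC n h f x‖ ≤ modulus n f δ := by
  obtain ⟨C, hC⟩ :=
    isBounded_iff_forall_norm_le.mp (hper.isBounded_of_continuous Real.two_pi_pos.ne' hf)
  refine le_csSup ⟨2 ^ n * C, ?_⟩ ⟨x, h, hh, rfl⟩
  rintro _ ⟨y, h', -, rfl⟩
  exact norm_deltaC_le (fun u => hC _ ⟨u, rfl⟩) n h' y

theorem stmt14_general (f : ℝ → ℂ) (hf : Continuous f) (hper : Function.Periodic f (2 * Real.pi))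
    (k m : ℕ) (δ : ℝ) :
    modulus (2 * k) (VP k m f) δ ≤ (2 * (k : ℝ) + 1) * modulus (2 * k) f δ := by
  refine Real.sSup_le ?_ (by have := modulus_nonneg (2 * k) f δ; positivity)
  rintro _ ⟨x, h, hh, rfl⟩
  rw [deltaC_VP (hf.intervalIntegrable _ _) hper]
  exact norm_VP_le ((continuous_deltaC hf _ h).intervalIntegrable _ _)
    (norm_deltaC_le_modulus hf hper _ hh) k m x

/-- The de la Vallée Poussin mean does not increase smoothness by more than a factor
`2k+1`: `ω_{2k}(v_{k,m}f, δ) ≤ (2k+1) ω_{2k}(f, δ)`. -/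
theorem stmt14 (f : ℝ → ℂ) (hf : Continuous f) (hper : Function.Periodic f (2 * Real.pi))
    (k m : ℕ) (hk : 1 ≤ k) (hm : 1 ≤ m) (δ : ℝ) (hδ : 0 < δ) :
    modulus (2 * k) (VP k m f) δ ≤ (2 * (k : ℝ) + 1) * modulus (2 * k) f δ :=
  stmt14_general f hf hper k m δ
end
end
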